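/- Let A be a real M×N matrix such that AA* is invertible. Suppose y = Ax + e, where x ∈ ℝ^N is s-sparse with support S and e ∈ ℝ^M. Let μ′ ∈ ℝ^N be s′-sparse and let T be an index set of t largest absolute entries of the vector μ′ + A*(AA*)⁻¹(y − Aμ′), with t ≥ s (that is, |T| = t and every entry of μ′ + A*(AA*)⁻¹(y − Aμ′) indexed by T has absolute value at least that of every entry indexed outside T). Then ‖x_{T^c}‖₂ ≤ √2 · (γ_{s+s′+t}(A) · ‖x − μ′‖₂ + √(1+θ_{t+s}(A)) · ‖e‖₂). -/

import Mathlib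

/-!
Write `P = (AAᴴ)^{-1/2} A`. Then `PPᴴ = 1` and `Aᴴ(AAᴴ)⁻¹A = PᴴP`, so the residual is
`z - x = Aᴴ(AAᴴ)⁻¹ e - (1 - PᴴP)(x - μ')`, where `1 - PᴴP` is an orthogonal projection.
Since `T` carries the `t ≥ s` largest entries of `z`, the part of `x` outside `T` is bounded by
`√2` times the residual on `S ∪ T`.
For `|U| ≤ k` the restriction `w = (Bᴴ v)_U` satisfies `‖w‖² = ⟨Bw, v⟩`, so a bound for `B` on
`k`-sparse vectors transfers to `w`. With `B = (AAᴴ)⁻¹A` this gives the `θ` term; with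
`B = 1 - PᴴP`, used twice through `(1 - PᴴP)ᴴ(1 - PᴴP) = 1 - PᴴP` and
`‖(1 - PᴴP)u‖² = ‖u‖² - ‖Pu‖² ≤ γ‖u‖²`, it gives the `γ` term.
-/

open Matrix

/-- The Euclidean (ℓ²) norm of a vector in ℝⁿ. -/
noncomputable def norm2 {n : ℕ} (x : Fin n → ℝ) : ℝ := Real.sqrt (∑ i, x i ^ 2)

/-- `x` is `s`-sparse: it has at most `s` nonzero entries. -/
def sparse {n : ℕ} (s : ℕ) (x : Fin n → ℝ) : Prop :=
  (Finset.univ.filter fun i => x i ≠ 0).card ≤ s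

/-- `restrict T x` is the vector agreeing with `x` on `T` and zero outside `T`. -/
def restrict {n : ℕ} (T : Finset (Fin n)) (x : Fin n → ℝ) : Fin n → ℝ :=
  fun i => if i ∈ T then x i else 0

section
open scoped ComplexOrder

/-- The positive semidefinite square root of a positive semidefinite matrix
(as defined in Mathlib of December 2024; since removed from Mathlib). -/
noncomputable def Matrix.PosSemidef.sqrt {n 𝕜 : Type*} [Fintype n] [RCLike 𝕜] [DecidableEq n]
    {A : Matrix n n 𝕜} (hA : Matrix.PosSemidef A) : Matrix n n 𝕜 :=
  hA.1.eigenvectorUnitary.1 * diagonal ((↑) ∘ (√·) ∘ hA.1.eigenvalues) *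
  (star hA.1.eigenvectorUnitary : Matrix n n 𝕜)

end

/-- The preconditioned matrix `(AAᴴ)^{-1/2} A`, where `(AAᴴ)^{-1/2}` is the inverse of the
positive semidefinite square root of `AAᴴ`. -/
noncomputable def precond {M N : ℕ} (A : Matrix (Fin M) (Fin N) ℝ) :
    Matrix (Fin M) (Fin N) ℝ :=
  ((Matrix.posSemidef_self_mul_conjTranspose A).sqrt)⁻¹ * A

/-- The preconditioned restricted isometry constant `γ_s(A)`: the smallest `γ ≥ 0` such that
`(1-γ)‖x‖₂² ≤ ‖(AAᴴ)^{-1/2}Ax‖₂²` for all `s`-sparse `x`. -/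
noncomputable def pripConst {M N : ℕ} (A : Matrix (Fin M) (Fin N) ℝ) (s : ℕ) : ℝ :=
  sInf {γ : ℝ | 0 ≤ γ ∧ ∀ x : Fin N → ℝ, sparse s x →
    (1 - γ) * norm2 x ^ 2 ≤ norm2 ((precond A).mulVec x) ^ 2}

/-- The restricted isometry constant `δ_s(B)`: the smallest `δ ≥ 0` such that
`(1-δ)‖x‖₂² ≤ ‖Bx‖₂² ≤ (1+δ)‖x‖₂²` for all `s`-sparse `x`. -/
noncomputable def ripConst {m n : ℕ} (B : Matrix (Fin m) (Fin n) ℝ) (s : ℕ) : ℝ :=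
  sInf {δ : ℝ | 0 ≤ δ ∧ ∀ x : Fin n → ℝ, sparse s x →
    (1 - δ) * norm2 x ^ 2 ≤ norm2 (B.mulVec x) ^ 2 ∧
      norm2 (B.mulVec x) ^ 2 ≤ (1 + δ) * norm2 x ^ 2}

/-- `θ_t(A) = δ_t((AAᴴ)⁻¹A)`. -/
noncomputable def thetaConst {M N : ℕ} (A : Matrix (Fin M) (Fin N) ℝ) (t : ℕ) : ℝ :=
  ripConst ((A * Aᴴ)⁻¹ * A) t

namespace Matrix.PosSemidef
open scoped ComplexOrder

variable {n 𝕜 : Type*} [Fintype n] [RCLike 𝕜] [DecidableEq n] {A : Matrix n n 𝕜}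

lemma sqrt_mul_self (hA : A.PosSemidef) : hA.sqrt * hA.sqrt = A := by
  have hU : (star hA.1.eigenvectorUnitary : Matrix n n 𝕜) * hA.1.eigenvectorUnitary = 1 :=
    Unitary.coe_star_mul_self _
  conv_rhs => rw [hA.1.spectral_theorem, Unitary.conjStarAlgAut_apply]
  rw [sqrt, show ∀ U D V : Matrix n n 𝕜, U * D * V * (U * D * V) = U * (D * (V * U) * D) * V by
    intros; simp only [Matrix.mul_assoc], hU, Matrix.mul_one, diagonal_mul_diagonal]
  congr 3
  funext i
  simp [← RCLike.ofReal_mul, Real.mul_self_sqrt (hA.eigenvalues_nonneg i)]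

lemma conjTranspose_sqrt (hA : A.PosSemidef) : hA.sqrtᴴ = hA.sqrt := by
  simp only [sqrt, star_eq_conjTranspose, conjTranspose_mul, conjTranspose_conjTranspose,
    diagonal_conjTranspose, Matrix.mul_assoc]
  congr 3
  ext i
  simp

end Matrix.PosSemidef

section Precond

variable {M N : ℕ} (A : Matrix (Fin M) (Fin N) ℝ)

lemma precond_mul_conjTranspose (hA : IsUnit (A * Aᴴ).det) :
    precond A * (precond A)ᴴ = 1 := by
  have hAA := A.posSemidef_self_mul_conjTranspose
  -- `R` is abstracted so that rewriting need not reach the proof term inside `precond`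
  set R := hAA.sqrt
  have hRR : R * R = A * Aᴴ := hAA.sqrt_mul_self
  have hRH : Rᴴ = R := hAA.conjTranspose_sqrt
  have hP : precond A = R⁻¹ * A := rfl
  clear_value R
  have hR : IsUnit R.det := by
    rw [← isUnit_mul_self_iff, ← det_mul, hRR]
    exact hA
  calc precond A * (precond A)ᴴ = R⁻¹ * (R * R) * R⁻¹ := by
        rw [hP, conjTranspose_mul, conjTranspose_nonsing_inv, hRH, hRR]
        simp only [Matrix.mul_assoc]
    _ = 1 := by
        rw [← Matrix.mul_assoc, nonsing_inv_mul _ hR, Matrix.one_mul, mul_nonsing_inv _ hR]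

lemma conjTranspose_mul_inv_mul_eq_precond :
    Aᴴ * (A * Aᴴ)⁻¹ * A = (precond A)ᴴ * precond A := by
  have hAA := A.posSemidef_self_mul_conjTranspose
  conv_lhs => rw [← hAA.sqrt_mul_self, Matrix.mul_inv_rev]
  rw [precond, conjTranspose_mul, conjTranspose_nonsing_inv, hAA.conjTranspose_sqrt]
  simp only [Matrix.mul_assoc]

end Precond

lemma le_sqrt_mul_of_sq_le_mul_sq {a b c : ℝ} (ha : 0 ≤ a) (hb : 0 ≤ b) (h : a ^ 2 ≤ c * b ^ 2) :
    a ≤ √c * b := by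
  rw [← Real.sqrt_sq ha, ← Real.sqrt_sq hb, ← Real.sqrt_mul' _ (sq_nonneg b)]
  exact Real.sqrt_le_sqrt h

lemma Finset.sum_le_sum_of_card_le_of_forall_le {ι N : Type*} [AddCommMonoid N] [LinearOrder N]
    [IsOrderedAddMonoid N] {F G : Finset ι} {f : ι → N}
    (hf : ∀ i ∈ G, 0 ≤ f i) (hcard : F.card ≤ G.card) (hle : ∀ j ∈ F, ∀ i ∈ G, f j ≤ f i) :
    ∑ j ∈ F, f j ≤ ∑ i ∈ G, f i := by
  rcases G.eq_empty_or_nonempty with rfl | hG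
  · simp_all
  calc ∑ j ∈ F, f j ≤ F.card • G.inf' hG f :=
        sum_le_card_nsmul _ _ _ fun j hj => le_inf' hG f (hle j hj)
    _ ≤ G.card • G.inf' hG f := nsmul_le_nsmul_left (le_inf' hG f hf) hcard
    _ ≤ ∑ i ∈ G, f i := card_nsmul_le_sum _ _ _ fun i hi => inf'_le f hi

section Norm2

variable {n : ℕ}

lemma norm2_eq_norm_toLp (x : Fin n → ℝ) : norm2 x = ‖WithLp.toLp 2 x‖ := by
  simp [norm2, EuclideanSpace.norm_eq]

lemma norm2_nonneg (x : Fin n → ℝ) : 0 ≤ norm2 x := Real.sqrt_nonneg _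

lemma norm2_sq (x : Fin n → ℝ) : norm2 x ^ 2 = x ⬝ᵥ x := by
  rw [norm2, Real.sq_sqrt (by positivity)]
  simp [dotProduct, sq]

lemma norm2_sub_le (x y : Fin n → ℝ) : norm2 (x - y) ≤ norm2 x + norm2 y := by
  simpa only [norm2_eq_norm_toLp, WithLp.toLp_sub] using norm_sub_le _ _

lemma dotProduct_le_norm2_mul_norm2 (x y : Fin n → ℝ) : x ⬝ᵥ y ≤ norm2 x * norm2 y := by
  simpa [norm2_eq_norm_toLp, EuclideanSpace.inner_eq_star_dotProduct, dotProduct_comm]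
    using real_inner_le_norm (WithLp.toLp 2 x) (WithLp.toLp 2 y)

end Norm2

section Restrict

variable {n : ℕ}

lemma restrict_sub (U : Finset (Fin n)) (x y : Fin n → ℝ) :
    restrict U (x - y) = restrict U x - restrict U y := by
  ext i
  by_cases hi : i ∈ U <;> simp [restrict, hi]

lemma restrict_congr {U : Finset (Fin n)} {x y : Fin n → ℝ} (h : ∀ i ∈ U, x i = y i) :
    restrict U x = restrict U y := by
  ext i
  by_cases hi : i ∈ U <;> simp [restrict, hi, h]

lemma restrict_compl_eq_restrict_sdiff {S : Finset (Fin n)} {x : Fin n → ℝ}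
    (hS : ∀ i, x i ≠ 0 → i ∈ S) (T : Finset (Fin n)) : restrict Tᶜ x = restrict (S \ T) x := by
  ext i
  by_cases hiT : i ∈ T
  · simp [restrict, hiT]
  · by_cases hiS : i ∈ S
    · simp [restrict, hiT, hiS]
    · simpa [restrict, hiT, hiS] using mt (hS i) hiS

lemma norm2_restrict_sq (U : Finset (Fin n)) (x : Fin n → ℝ) :
    norm2 (restrict U x) ^ 2 = ∑ i ∈ U, x i ^ 2 := by
  simp [norm2_sq, dotProduct, restrict, ← sq, apply_ite (· ^ 2), Finset.sum_ite_mem]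

lemma restrict_dotProduct_self (U : Finset (Fin n)) (x : Fin n → ℝ) :
    restrict U x ⬝ᵥ x = norm2 (restrict U x) ^ 2 := by
  rw [norm2_sq]
  refine Finset.sum_congr rfl fun i _ => ?_
  by_cases hi : i ∈ U <;> simp [restrict, hi]

lemma norm2_restrict_le_of_subset {U V : Finset (Fin n)} (h : U ⊆ V) (x : Fin n → ℝ) :
    norm2 (restrict U x) ≤ norm2 (restrict V x) := by
  refine (sq_le_sq₀ (norm2_nonneg _) (norm2_nonneg _)).mp ?_
  rw [norm2_restrict_sq, norm2_restrict_sq]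
  exact Finset.sum_le_sum_of_subset_of_nonneg h fun i _ _ => sq_nonneg (x i)

lemma norm2_restrict_add_le_of_disjoint {U V : Finset (Fin n)} (h : Disjoint U V)
    (x : Fin n → ℝ) :
    norm2 (restrict U x) + norm2 (restrict V x) ≤ √2 * norm2 (restrict (U ∪ V) x) := by
  have hUV : norm2 (restrict (U ∪ V) x) ^ 2 =
      norm2 (restrict U x) ^ 2 + norm2 (restrict V x) ^ 2 := by
    simp only [norm2_restrict_sq, Finset.sum_union h]
  refine le_sqrt_mul_of_sq_le_mul_sq (add_nonneg (norm2_nonneg _) (norm2_nonneg _))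
    (norm2_nonneg _) ?_
  nlinarith [sq_nonneg (norm2 (restrict U x) - norm2 (restrict V x))]

lemma norm2_restrict_le_of_card_le {F G : Finset (Fin n)} {x : Fin n → ℝ}
    (hcard : F.card ≤ G.card) (hle : ∀ j ∈ F, ∀ i ∈ G, |x j| ≤ |x i|) :
    norm2 (restrict F x) ≤ norm2 (restrict G x) := by
  refine (sq_le_sq₀ (norm2_nonneg _) (norm2_nonneg _)).mp ?_
  rw [norm2_restrict_sq, norm2_restrict_sq]
  refine Finset.sum_le_sum_of_card_le_of_forall_le (fun i _ => sq_nonneg (x i)) hcard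
    fun j hj i hi => ?_
  rw [← sq_abs (x j), ← sq_abs (x i)]
  exact pow_le_pow_left₀ (abs_nonneg _) (hle j hj i hi) 2

end Restrict

section Sparse

variable {n : ℕ}

lemma sparse_of_support_subset {U : Finset (Fin n)} {x : Fin n → ℝ} {k : ℕ}
    (h : ∀ i, x i ≠ 0 → i ∈ U) (hU : U.card ≤ k) : sparse k x :=
  le_trans (Finset.card_le_card fun i hi => h i (Finset.mem_filter.mp hi).2) hU

lemma sparse_restrict {U : Finset (Fin n)} {k : ℕ} (hU : U.card ≤ k) (x : Fin n → ℝ) :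
    sparse k (restrict U x) :=
  sparse_of_support_subset (fun i hi => by by_contra h; simp [restrict, h] at hi) hU

lemma sparse_sub {a b : ℕ} {x y : Fin n → ℝ} (hx : sparse a x) (hy : sparse b y) :
    sparse (a + b) (x - y) := by
  refine sparse_of_support_subset
    (U := Finset.univ.filter (x · ≠ 0) ∪ Finset.univ.filter (y · ≠ 0)) (fun i hi => ?_)
    ((Finset.card_union_le _ _).trans (add_le_add hx hy))
  by_contra h
  simp_all

end Sparse

section Constants

lemma le_sInf_mul {S : Set ℝ} (hS : S.Nonempty) {a b : ℝ} (ha : 0 ≤ a)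
    (h : ∀ γ ∈ S, b ≤ γ * a) : b ≤ sInf S * a := by
  rw [mul_comm, ← smul_eq_mul, ← Real.sInf_smul_of_nonneg ha]
  refine le_csInf hS.smul_set ?_
  rintro _ ⟨γ, hγ, rfl⟩
  simpa only [smul_eq_mul, mul_comm a] using h γ hγ

lemma exists_norm2_mulVec_le {m n : ℕ} (B : Matrix (Fin m) (Fin n) ℝ) :
    ∃ C, ∀ x, norm2 (B *ᵥ x) ≤ C * norm2 x := by
  let f := LinearMap.toContinuousLinearMap (Matrix.toLpLin 2 2 B)
  refine ⟨‖f‖, fun x => ?_⟩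
  simpa [norm2_eq_norm_toLp, f, toLpLin_toLp] using f.le_opNorm (WithLp.toLp 2 x)

variable {M N : ℕ} (A : Matrix (Fin M) (Fin N) ℝ) {k : ℕ}

lemma pripConst_nonneg : 0 ≤ pripConst A k := Real.sInf_nonneg fun _ hγ => hγ.1

lemma norm2_sq_sub_le_pripConst {v : Fin N → ℝ} (hv : sparse k v) :
    norm2 v ^ 2 - norm2 (precond A *ᵥ v) ^ 2 ≤ pripConst A k * norm2 v ^ 2 := by
  refine le_sInf_mul ?_ (sq_nonneg _) fun γ hγ => ?_
  · exact ⟨1, zero_le_one, fun x _ => by simp [sq_nonneg]⟩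
  · linarith [hγ.2 v hv]

lemma norm2_mulVec_sq_le_ripConst {m n : ℕ} (B : Matrix (Fin m) (Fin n) ℝ) {w : Fin n → ℝ}
    (hw : sparse k w) : norm2 (B *ᵥ w) ^ 2 ≤ (1 + ripConst B k) * norm2 w ^ 2 := by
  obtain ⟨C, hBC⟩ := exists_norm2_mulVec_le B
  have hbound (x : Fin n → ℝ) : norm2 (B *ᵥ x) ^ 2 ≤ C ^ 2 * norm2 x ^ 2 := by
    rw [← mul_pow]
    exact pow_le_pow_left₀ (norm2_nonneg _) (hBC x) 2
  have : norm2 (B *ᵥ w) ^ 2 - norm2 w ^ 2 ≤ ripConst B k * norm2 w ^ 2 := by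
    refine le_sInf_mul ?_ (sq_nonneg _) fun δ hδ => ?_
    · refine ⟨C ^ 2 + 1, by positivity, fun x _ => ⟨?_, ?_⟩⟩
      · nlinarith [sq_nonneg (norm2 x), sq_nonneg (norm2 (B *ᵥ x))]
      · nlinarith [hbound x, sq_nonneg (norm2 x)]
    · linarith [(hδ.2 w hw).2]
  linarith

end Constants

lemma norm2_restrict_compl_le_of_forall_abs_le {n : ℕ} {x z : Fin n → ℝ} {S T : Finset (Fin n)}
    (hS : ∀ i, x i ≠ 0 → i ∈ S) (hST : S.card ≤ T.card)
    (hT : ∀ i ∈ T, ∀ j ∉ T, |z j| ≤ |z i|) :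
    norm2 (restrict Tᶜ x) ≤ √2 * norm2 (restrict (S ∪ T) (z - x)) := by
  have hz : restrict (T \ S) z = restrict (T \ S) (z - x) :=
    restrict_congr fun i hi => by simp [not_imp_comm.mp (hS i) (Finset.mem_sdiff.mp hi).2]
  have hzST : norm2 (restrict (S \ T) z) ≤ norm2 (restrict (T \ S) z) :=
    norm2_restrict_le_of_card_le (Finset.card_sdiff_le_card_sdiff_iff.mpr hST)
      fun j hj i hi => hT i (Finset.mem_sdiff.mp hi).1 j (Finset.mem_sdiff.mp hj).2
  calc norm2 (restrict Tᶜ x) = norm2 (restrict (S \ T) z - restrict (S \ T) (z - x)) := by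
        rw [restrict_compl_eq_restrict_sdiff hS, ← restrict_sub, sub_sub_cancel]
    _ ≤ norm2 (restrict (T \ S) (z - x)) + norm2 (restrict (S \ T) (z - x)) := by
        rw [← hz]
        exact (norm2_sub_le _ _).trans (add_le_add_left hzST _)
    _ ≤ √2 * norm2 (restrict (T \ S ∪ S \ T) (z - x)) :=
        norm2_restrict_add_le_of_disjoint disjoint_sdiff_sdiff _
    _ ≤ √2 * norm2 (restrict (S ∪ T) (z - x)) := by
        gcongr
        exact norm2_restrict_le_of_subset (Finset.union_subset
          (Finset.sdiff_subset.trans Finset.subset_union_right)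
          (Finset.sdiff_subset.trans Finset.subset_union_left)) _

section Operators

variable {m n : ℕ}

lemma dotProduct_conjTranspose_mulVec (B : Matrix (Fin m) (Fin n) ℝ) (w : Fin n → ℝ)
    (e : Fin m → ℝ) : w ⬝ᵥ Bᴴ *ᵥ e = B *ᵥ w ⬝ᵥ e := by
  rw [dotProduct_mulVec, conjTranspose_eq_transpose_of_trivial, vecMul_transpose]

lemma norm2_restrict_conjTranspose_mulVec_le (B : Matrix (Fin m) (Fin n) ℝ) {k : ℕ} {c : ℝ}
    (hc : 0 ≤ c) (hB : ∀ w, sparse k w → norm2 (B *ᵥ w) ≤ c * norm2 w)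
    {U : Finset (Fin n)} (hU : U.card ≤ k) (e : Fin m → ℝ) :
    norm2 (restrict U (Bᴴ *ᵥ e)) ≤ c * norm2 e := by
  set w := restrict U (Bᴴ *ᵥ e)
  have hw : norm2 w ^ 2 ≤ c * norm2 e * norm2 w :=
    calc norm2 w ^ 2 = B *ᵥ w ⬝ᵥ e := by
          rw [← restrict_dotProduct_self, dotProduct_conjTranspose_mulVec]
      _ ≤ norm2 (B *ᵥ w) * norm2 e := dotProduct_le_norm2_mul_norm2 _ _
      _ ≤ c * norm2 w * norm2 e := by
          gcongr
          exacts [norm2_nonneg e, hB w (sparse_restrict hU _)]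
      _ = c * norm2 e * norm2 w := by ring
  nlinarith [norm2_nonneg w, mul_nonneg hc (norm2_nonneg e)]

lemma one_sub_conjTranspose_mul_self {P : Matrix (Fin m) (Fin n) ℝ} (hP : P * Pᴴ = 1) :
    (1 - Pᴴ * P)ᴴ * (1 - Pᴴ * P) = 1 - Pᴴ * P := by
  have hidem : Pᴴ * P * (Pᴴ * P) = Pᴴ * P := by
    rw [Matrix.mul_assoc, ← Matrix.mul_assoc P, hP, Matrix.one_mul]
  rw [conjTranspose_sub, conjTranspose_one, conjTranspose_mul, conjTranspose_conjTranspose,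
    sub_mul, mul_sub, mul_sub, hidem, Matrix.one_mul, Matrix.mul_one, Matrix.one_mul]
  abel

lemma norm2_one_sub_mulVec_sq {P : Matrix (Fin m) (Fin n) ℝ} (hP : P * Pᴴ = 1)
    (u : Fin n → ℝ) : norm2 ((1 - Pᴴ * P) *ᵥ u) ^ 2 = norm2 u ^ 2 - norm2 (P *ᵥ u) ^ 2 := by
  rw [norm2_sq, ← dotProduct_conjTranspose_mulVec, mulVec_mulVec,
    one_sub_conjTranspose_mul_self hP, sub_mulVec, one_mulVec, dotProduct_sub, ← mulVec_mulVec,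
    dotProduct_conjTranspose_mulVec, norm2_sq, norm2_sq]

lemma norm2_restrict_one_sub_mulVec_le {P : Matrix (Fin m) (Fin n) ℝ} (hP : P * Pᴴ = 1)
    {k : ℕ} {γ : ℝ} (hγ : 0 ≤ γ)
    (hPγ : ∀ u, sparse k u → norm2 u ^ 2 - norm2 (P *ᵥ u) ^ 2 ≤ γ * norm2 u ^ 2)
    {U : Finset (Fin n)} (hU : U.card ≤ k) {v : Fin n → ℝ} (hv : sparse k v) :
    norm2 (restrict U ((1 - Pᴴ * P) *ᵥ v)) ≤ γ * norm2 v := by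
  set Q := 1 - Pᴴ * P
  have hQ (u : Fin n → ℝ) (hu : sparse k u) : norm2 (Q *ᵥ u) ≤ √γ * norm2 u :=
    le_sqrt_mul_of_sq_le_mul_sq (norm2_nonneg _) (norm2_nonneg _)
      ((norm2_one_sub_mulVec_sq hP u).trans_le (hPγ u hu))
  calc norm2 (restrict U (Q *ᵥ v)) = norm2 (restrict U (Qᴴ *ᵥ (Q *ᵥ v))) := by
        rw [mulVec_mulVec, one_sub_conjTranspose_mul_self hP]
    _ ≤ √γ * norm2 (Q *ᵥ v) :=
        norm2_restrict_conjTranspose_mulVec_le Q (Real.sqrt_nonneg γ) hQ hU _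
    _ ≤ √γ * (√γ * norm2 v) := by gcongr; exact hQ v hv
    _ = γ * norm2 v := by rw [← mul_assoc, Real.mul_self_sqrt hγ]

end Operators

section Bounds

variable {M N : ℕ} (A : Matrix (Fin M) (Fin N) ℝ) {k : ℕ} {U : Finset (Fin N)}

lemma norm2_restrict_one_sub_mulVec_le_pripConst (hA : IsUnit (A * Aᴴ).det) (hU : U.card ≤ k)
    {v : Fin N → ℝ} (hv : sparse k v) :
    norm2 (restrict U ((1 - (precond A)ᴴ * precond A) *ᵥ v)) ≤ pripConst A k * norm2 v :=
  norm2_restrict_one_sub_mulVec_le (precond_mul_conjTranspose A hA) (pripConst_nonneg A)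
    (fun _ hu => norm2_sq_sub_le_pripConst A hu) hU hv

lemma norm2_restrict_mulVec_le_thetaConst (hU : U.card ≤ k) (e : Fin M → ℝ) :
    norm2 (restrict U ((Aᴴ * (A * Aᴴ)⁻¹) *ᵥ e)) ≤ √(1 + thetaConst A k) * norm2 e := by
  have hB : Aᴴ * (A * Aᴴ)⁻¹ = ((A * Aᴴ)⁻¹ * A)ᴴ := by
    rw [conjTranspose_mul, conjTranspose_nonsing_inv, (isHermitian_mul_conjTranspose_self A).eq]
  rw [hB]
  exact norm2_restrict_conjTranspose_mulVec_le _ (Real.sqrt_nonneg _)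
    (fun _ hw => le_sqrt_mul_of_sq_le_mul_sq (norm2_nonneg _) (norm2_nonneg _)
      (norm2_mulVec_sq_le_ripConst _ hw)) hU e

end Bounds

theorem stmt5 {M N : ℕ} (A : Matrix (Fin M) (Fin N) ℝ) (hA : IsUnit (A * Aᴴ).det)
    (s s' t : ℕ) (hts : t ≥ s) (x μ' : Fin N → ℝ) (e : Fin M → ℝ) (y : Fin M → ℝ)
    (S : Finset (Fin N)) (hxS : ∀ i, x i ≠ 0 ↔ i ∈ S) (hx : sparse s x)
    (hμ' : sparse s' μ')
    (hy : y = A.mulVec x + e)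
    (z : Fin N → ℝ)
    (hz : z = μ' + (Aᴴ * (A * Aᴴ)⁻¹).mulVec (y - A.mulVec μ'))
    (T : Finset (Fin N)) (hTcard : T.card = t)
    (hTbig : ∀ i ∈ T, ∀ j ∉ T, |z j| ≤ |z i|) :
    norm2 (restrict Tᶜ x) ≤
      Real.sqrt 2 * (pripConst A (s + s' + t) * norm2 (x - μ') +
        Real.sqrt (1 + thetaConst A (t + s)) * norm2 e) := by
  have hScard : S.card ≤ s := by
    rwa [show S = Finset.univ.filter (x · ≠ 0) by ext i; simp [hxS]]
  have hUcard : (S ∪ T).card ≤ t + s := (Finset.card_union_le S T).trans (by omega)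
  have hv : sparse (s + s' + t) (x - μ') := le_trans (sparse_sub hx hμ') (Nat.le_add_right _ _)
  have hres : z - x = (Aᴴ * (A * Aᴴ)⁻¹) *ᵥ e - (1 - (precond A)ᴴ * precond A) *ᵥ (x - μ') := by
    have hy' : y - A *ᵥ μ' = A *ᵥ (x - μ') + e := by rw [hy, mulVec_sub]; abel
    rw [hz, hy', mulVec_add, mulVec_mulVec, conjTranspose_mul_inv_mul_eq_precond, sub_mulVec,
      one_mulVec]
    abel
  calc norm2 (restrict Tᶜ x) ≤ √2 * norm2 (restrict (S ∪ T) (z - x)) :=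
        norm2_restrict_compl_le_of_forall_abs_le (fun i => (hxS i).mp) (by omega) hTbig
    _ ≤ _ := by
        rw [hres, restrict_sub, add_comm (pripConst A _ * _)]
        gcongr
        exact (norm2_sub_le _ _).trans (add_le_add
          (norm2_restrict_mulVec_le_thetaConst A hUcard e)
          (norm2_restrict_one_sub_mulVec_le_pripConst A hA (hUcard.trans (by omega)) hv))
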